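/- arXiv:math/0102191 — 4 statements merged into one kernel-verified Lean document; each statement's English description precedes it below -/
import Mathlib

section
/- For every g ∈ SL(2,ℝ), the image gC of the unit circle C ⊂ ℝ² \ {0} intersects C. Consequently, any discrete subgroup of SL(2,ℝ) acting properly discontinuously on ℝ² \ {0} is finite, and ℝ² \ {0} admits no tessellation by a subgroup of SL(2,ℝ). -/
/-!
Writing `g = !![p, q; r, s]`, the form `Q v = |g v|² - |v|²` has Gram matrix `gᵀg - 1`, whose
determinant is `det (gᵀg) - tr (gᵀg) + 1 = 2 - (p² + q² + r² + s²) ≤ 0` because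
`p² + q² + r² + s² ≥ 2 |ps - qr| = 2`. So `Q` is indefinite or degenerate, has a nonzero
isotropic vector, and rescaling it gives a point of the unit circle `C` with `g v ∈ C`.

Hence every element of a group acting properly discontinuously on `ℝ² \ {0}` moves the compact
set `C` into itself, so the group is finite; and finitely many translates of a compact set are
bounded, so they cannot cover the unbounded set `ℝ² \ {0}`.
-/

/-- The topology on `SL(2,ℝ)`, induced from the space of matrices. -/
instance : TopologicalSpace (Matrix.SpecialLinearGroup (Fin 2) ℝ) :=
  TopologicalSpace.induced (fun g => (g : Matrix (Fin 2) (Fin 2) ℝ)) inferInstance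

open Matrix Bornology

lemma exists_ne_zero_quadratic_eq_zero {a b c : ℝ} (h : a * c ≤ b ^ 2) :
    ∃ x y : ℝ, (x ≠ 0 ∨ y ≠ 0) ∧ a * x ^ 2 + 2 * b * x * y + c * y ^ 2 = 0 := by
  by_cases ha : a = 0
  · exact ⟨1, 0, Or.inl one_ne_zero, by simp [ha]⟩
  have hdiscrim : ∃ s, discrim a (2 * b) c = s * s :=
    ⟨√(discrim a (2 * b) c), (Real.mul_self_sqrt (by rw [discrim]; nlinarith)).symm⟩
  obtain ⟨x, hx⟩ := exists_quadratic_eq_zero ha hdiscrim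
  exact ⟨x, 1, Or.inr one_ne_zero, by linear_combination hx⟩

lemma exists_ne_zero_sq_add_sq_mulVec_eq (M : Matrix (Fin 2) (Fin 2) ℝ) (hM : |M.det| = 1) :
    ∃ w : Fin 2 → ℝ, w ≠ 0 ∧ (M *ᵥ w) 0 ^ 2 + (M *ᵥ w) 1 ^ 2 = w 0 ^ 2 + w 1 ^ 2 := by
  set p := M 0 0; set q := M 0 1; set r := M 1 0; set s := M 1 1
  have hdet : M.det = p * s - q * r := by rw [det_fin_two]
  have hdet_sq : (p * s - q * r) ^ 2 = 1 := by rw [← hdet, ← sq_abs, hM, one_pow]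
  have htwo : 2 ≤ p ^ 2 + q ^ 2 + r ^ 2 + s ^ 2 := by
    rcases (abs_eq zero_le_one).mp (hdet ▸ hM) with h | h
    · nlinarith [sq_nonneg (p - s), sq_nonneg (q + r)]
    · nlinarith [sq_nonneg (p + s), sq_nonneg (q - r)]
  -- `|M ![x, y]|² - x² - y² = a x² + 2 b x y + c y²`,
  -- and `a c - b² = det² + 1 - (p² + q² + r² + s²)`
  obtain ⟨x, y, hxy, hQ⟩ := exists_ne_zero_quadratic_eq_zero
    (a := p ^ 2 + r ^ 2 - 1) (b := p * q + r * s) (c := q ^ 2 + s ^ 2 - 1)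
    (by nlinarith)
  refine ⟨![x, y], fun h => ?_, ?_⟩
  · have h0 := congrFun h 0
    have h1 := congrFun h 1
    simp only [cons_val_zero, cons_val_one, Pi.zero_apply] at h0 h1
    tauto
  · simp only [mulVec, dotProduct, Fin.sum_univ_two, cons_val_zero, cons_val_one]
    linear_combination hQ

lemma exists_sq_add_sq_eq_one_of_sq_add_sq_mulVec_eq (M : Matrix (Fin 2) (Fin 2) ℝ)
    {w : Fin 2 → ℝ} (hw : w ≠ 0)
    (hMw : (M *ᵥ w) 0 ^ 2 + (M *ᵥ w) 1 ^ 2 = w 0 ^ 2 + w 1 ^ 2) :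
    ∃ v : Fin 2 → ℝ, v 0 ^ 2 + v 1 ^ 2 = 1 ∧ (M *ᵥ v) 0 ^ 2 + (M *ᵥ v) 1 ^ 2 = 1 := by
  set n := w 0 ^ 2 + w 1 ^ 2
  have hn : 0 < n := by
    have : w 0 ≠ 0 ∨ w 1 ≠ 0 := by
      by_contra! h
      exact hw (funext fun i => by fin_cases i <;> simp [h.1, h.2])
    rcases this with h | h <;> positivity
  have hc : (√n)⁻¹ ^ 2 * n = 1 := by
    rw [inv_pow, Real.sq_sqrt hn.le, inv_mul_cancel₀ hn.ne']
  refine ⟨(√n)⁻¹ • w, ?_, ?_⟩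
  · simp only [Pi.smul_apply, smul_eq_mul]
    linear_combination hc
  · simp only [mulVec_smul, Pi.smul_apply, smul_eq_mul]
    linear_combination (√n)⁻¹ ^ 2 * hMw + hc

lemma exists_sq_add_sq_eq_one_mulVec (M : Matrix (Fin 2) (Fin 2) ℝ) (hM : |M.det| = 1) :
    ∃ v : Fin 2 → ℝ, v 0 ^ 2 + v 1 ^ 2 = 1 ∧ (M *ᵥ v) 0 ^ 2 + (M *ᵥ v) 1 ^ 2 = 1 :=
  let ⟨_, hw, hMw⟩ := exists_ne_zero_sq_add_sq_mulVec_eq M hM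
  exists_sq_add_sq_eq_one_of_sq_add_sq_mulVec_eq M hw hMw

lemma isCompact_sq_add_sq_eq_one : IsCompact {v : Fin 2 → ℝ | v 0 ^ 2 + v 1 ^ 2 = 1} := by
  refine Metric.isCompact_of_isClosed_isBounded
    (isClosed_eq (by fun_prop) continuous_const) ?_
  refine (Metric.isBounded_closedBall (x := 0) (r := 1)).subset fun v hv => ?_
  have hv : v 0 ^ 2 + v 1 ^ 2 = 1 := hv
  rw [mem_closedBall_zero_iff, pi_norm_le_iff_of_nonneg zero_le_one, Fin.forall_fin_two]
  simp only [Real.norm_eq_abs, ← sq_le_one_iff_abs_le_one]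
  constructor <;> nlinarith [sq_nonneg (v 0), sq_nonneg (v 1)]

lemma not_isBounded_setOf_ne_zero {E : Type*} [NormedAddCommGroup E] [NormedSpace ℝ E]
    [Nontrivial E] : ¬ IsBounded {v : E | v ≠ 0} := fun h =>
  NormedSpace.unbounded_univ ℝ E <|
    (h.union (isBounded_singleton (x := 0))).subset fun v _ => em' (v = 0)

def ActsProperlyDiscontinuouslyOnPuncturedPlane (Γ : Subgroup (SpecialLinearGroup (Fin 2) ℝ)) :
    Prop :=
  ∀ C : Set (Fin 2 → ℝ), IsCompact C → C ⊆ {v | v ≠ 0} →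
    {γ : SpecialLinearGroup (Fin 2) ℝ | γ ∈ Γ ∧
      ∃ v ∈ C, (γ : Matrix (Fin 2) (Fin 2) ℝ).mulVec v ∈ C}.Finite

namespace ActsProperlyDiscontinuouslyOnPuncturedPlane

variable {Γ : Subgroup (SpecialLinearGroup (Fin 2) ℝ)}

lemma finite (hΓ : ActsProperlyDiscontinuouslyOnPuncturedPlane Γ) :
    (Γ : Set (SpecialLinearGroup (Fin 2) ℝ)).Finite := by
  have hC : {v : Fin 2 → ℝ | v 0 ^ 2 + v 1 ^ 2 = 1} ⊆ {v | v ≠ 0} := by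
    rintro v hv rfl
    norm_num at hv
  refine (hΓ _ isCompact_sq_add_sq_eq_one hC).subset fun γ hγ => ?_
  obtain ⟨v, hv, hγv⟩ := exists_sq_add_sq_eq_one_mulVec γ (by rw [γ.det_coe, abs_one])
  exact ⟨hγ, v, hv, hγv⟩

lemma not_cocompact (hΓ : ActsProperlyDiscontinuouslyOnPuncturedPlane Γ) {K : Set (Fin 2 → ℝ)}
    (hK : IsCompact K) :
    ¬ ∀ v : Fin 2 → ℝ, v ≠ 0 →
      ∃ γ ∈ Γ, ∃ k ∈ K, (γ : Matrix (Fin 2) (Fin 2) ℝ) *ᵥ k = v := by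
  intro hcover
  have htranslates : IsCompact (⋃ γ ∈ (Γ : Set (SpecialLinearGroup (Fin 2) ℝ)),
      ((γ : Matrix (Fin 2) (Fin 2) ℝ) *ᵥ ·) '' K) :=
    hΓ.finite.isCompact_biUnion fun γ _ =>
      hK.image (mulVecLin (γ : Matrix (Fin 2) (Fin 2) ℝ)).continuous_of_finiteDimensional
  refine not_isBounded_setOf_ne_zero (htranslates.isBounded.subset fun v hv => ?_)
  obtain ⟨γ, hγ, k, hk, rfl⟩ := hcover v hv
  exact Set.mem_biUnion hγ ⟨k, hk, rfl⟩

end ActsProperlyDiscontinuouslyOnPuncturedPlane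

/-- For every `g ∈ SL(2,ℝ)`, the image `g C` of the unit circle
`C ⊆ ℝ² \ {0}` intersects `C`.  Consequently, any discrete subgroup of `SL(2,ℝ)` acting
properly discontinuously on `ℝ² \ {0}` is finite, and `ℝ² \ {0}` admits no tessellation
(no discrete subgroup acting properly discontinuously with compact quotient). -/
theorem stmt9 :
    (∀ g : Matrix.SpecialLinearGroup (Fin 2) ℝ,
      ∃ v : Fin 2 → ℝ, (v 0) ^ 2 + (v 1) ^ 2 = 1 ∧
        ((g : Matrix (Fin 2) (Fin 2) ℝ).mulVec v 0) ^ 2 +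
          ((g : Matrix (Fin 2) (Fin 2) ℝ).mulVec v 1) ^ 2 = 1) ∧
    (∀ Γ : Subgroup (Matrix.SpecialLinearGroup (Fin 2) ℝ), DiscreteTopology Γ →
      (∀ C : Set (Fin 2 → ℝ), IsCompact C → C ⊆ {v | v ≠ 0} →
        {γ : Matrix.SpecialLinearGroup (Fin 2) ℝ | γ ∈ Γ ∧
          ∃ v ∈ C, (γ : Matrix (Fin 2) (Fin 2) ℝ).mulVec v ∈ C}.Finite) →
      (Γ : Set (Matrix.SpecialLinearGroup (Fin 2) ℝ)).Finite) ∧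
    ¬ ∃ Γ : Subgroup (Matrix.SpecialLinearGroup (Fin 2) ℝ), DiscreteTopology Γ ∧
      (∀ C : Set (Fin 2 → ℝ), IsCompact C → C ⊆ {v | v ≠ 0} →
        {γ : Matrix.SpecialLinearGroup (Fin 2) ℝ | γ ∈ Γ ∧
          ∃ v ∈ C, (γ : Matrix (Fin 2) (Fin 2) ℝ).mulVec v ∈ C}.Finite) ∧
      (∃ K : Set (Fin 2 → ℝ), IsCompact K ∧ K ⊆ {v | v ≠ 0} ∧
        ∀ v : Fin 2 → ℝ, v ≠ 0 →
          ∃ γ ∈ Γ, ∃ k ∈ K, (γ : Matrix (Fin 2) (Fin 2) ℝ).mulVec k = v) := by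
  refine ⟨fun g => exists_sq_add_sq_eq_one_mulVec g (by rw [g.det_coe, abs_one]),
    fun _ _ hΓ => ActsProperlyDiscontinuouslyOnPuncturedPlane.finite hΓ, ?_⟩
  rintro ⟨Γ, -, hΓ, K, hK, -, hcover⟩
  exact ActsProperlyDiscontinuouslyOnPuncturedPlane.not_cocompact hΓ hK hcover
end

section
/- Let G be a Lie group, H, H₁, L, L₁ closed subgroups. If L acts properly on G/H and there is a compact subset C of G with H₁ ⊆ CHC and L₁ ⊆ CLC, then L₁ acts properly on G/H₁. -/
open scoped Manifold Pointwise

/-- Let `G` be a Lie group and `H, H₁, L, L₁` closed subgroups.  If `L`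
acts properly on `G/H` (i.e. `L ∩ CHC` is compact for every compact `C ⊆ G`) and there is
a compact subset `C` of `G` with `H₁ ⊆ CHC` and `L₁ ⊆ CLC`, then `L₁` acts properly on
`G/H₁`. -/
theorem stmt11 {E G : Type*} [NormedAddCommGroup E] [NormedSpace ℝ E] [FiniteDimensional ℝ E]
    [TopologicalSpace G] [ChartedSpace E G] [Group G] [IsTopologicalGroup G] [T2Space G]
    [LieGroup 𝓘(ℝ, E) (⊤ : ℕ∞) G]
    (L L₁ H H₁ : Subgroup G)
    (hL : IsClosed (L : Set G)) (hL₁ : IsClosed (L₁ : Set G))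
    (hH : IsClosed (H : Set G)) (hH₁ : IsClosed (H₁ : Set G))
    (hproper : ∀ C : Set G, IsCompact C →
      IsCompact ((L : Set G) ∩ (C * (H : Set G) * C)))
    (hcomp : ∃ C : Set G, IsCompact C ∧
      (H₁ : Set G) ⊆ C * (H : Set G) * C ∧ (L₁ : Set G) ⊆ C * (L : Set G) * C) :
    ∀ C : Set G, IsCompact C →
      IsCompact ((L₁ : Set G) ∩ (C * (H₁ : Set G) * C)) := by
  obtain ⟨C₀, hC₀, hH₁sub, hL₁sub⟩ := hcomp
  intro C hC
  set K : Set G := C₀⁻¹ * C * C₀ ∪ C₀ * C * C₀⁻¹ with hK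
  have hKcomp : IsCompact K := ((hC₀.inv.mul hC).mul hC₀).union ((hC₀.mul hC).mul hC₀.inv)
  have hbig : IsCompact (C₀ * ((L : Set G) ∩ (K * (H : Set G) * K)) * C₀) :=
    (hC₀.mul (hproper K hKcomp)).mul hC₀
  apply IsCompact.of_isClosed_subset hbig
  · exact hL₁.inter (((hH₁.mul_left_of_isCompact hC).mul_right_of_isCompact hC))
  · rintro x ⟨hxL₁, hxC⟩
    obtain ⟨cl, hcl, c₂, hc₂, rfl⟩ := hL₁sub hxL₁
    obtain ⟨c₁, hc₁, l, hl, rfl⟩ := hcl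
    -- c₁ * l * c₂ ∈ C * H₁ * C
    obtain ⟨ah, hah, b, hb, hab⟩ := hxC
    obtain ⟨a, ha, h₁, hh₁, rfl⟩ := hah
    obtain ⟨dh, hdh, d₂, hd₂, hd⟩ := hH₁sub hh₁
    obtain ⟨d₁, hd₁, h, hh, rfl⟩ := hdh
    have hd' : d₁ * h * d₂ = h₁ := hd
    have hab' : a * h₁ * b = c₁ * l * c₂ := hab
    have hlval : l = c₁⁻¹ * (a * (d₁ * h * d₂) * b) * c₂⁻¹ := by
      rw [hd', hab']; group
    have hlmem : l ∈ K * (H : Set G) * K := by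
      rw [hlval]
      refine ⟨(c₁⁻¹ * a * d₁) * h, ⟨c₁⁻¹ * a * d₁, ?_, h, hh, rfl⟩, d₂ * b * c₂⁻¹, ?_, by group⟩
      · exact Or.inl ⟨c₁⁻¹ * a, ⟨c₁⁻¹, Set.inv_mem_inv.2 hc₁, a, ha, rfl⟩, d₁, hd₁, rfl⟩
      · exact Or.inr ⟨d₂ * b, ⟨d₂, hd₂, b, hb, rfl⟩, c₂⁻¹, Set.inv_mem_inv.2 hc₂, rfl⟩
    exact ⟨c₁ * l, ⟨c₁, hc₁, l, ⟨hl, hlmem⟩, rfl⟩, c₂, hc₂, rfl⟩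
end

section
/- Let 𝔽 be ℝ or ℂ, n ≥ 3, and let V be a real subspace of 𝔽^{n-2} ⊕ 𝔽^{n-2} such that for every (x,y) ∈ V the 𝔽-span of {x,y} has 𝔽-dimension at most 1. Then either dim_ℝ V ≤ (dim_ℝ 𝔽)(n-2), or n = 3 and dim_ℝ V ≤ 2·dim_ℝ 𝔽. -/
open Module

private lemma aux_dep {K M : Type*} [Field K] [AddCommGroup M] [Module K M]
    [FiniteDimensional K M] {x y : M}
    (h : Module.finrank K (Submodule.span K {x, y} : Submodule K M) ≤ 1)
    (hx : x ≠ 0) : ∃ c : K, y = c • x := by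
  have hle : Submodule.span K {x} ≤ Submodule.span K {x, y} :=
    Submodule.span_mono (Set.singleton_subset_iff.mpr (Set.mem_insert _ _))
  have h1 : Module.finrank K (Submodule.span K ({x} : Set M)) = 1 := by
    simpa using finrank_span_singleton hx
  have heq : Submodule.span K ({x} : Set M) = Submodule.span K {x, y} :=
    Submodule.eq_of_le_of_finrank_le hle (h.trans_eq h1.symm)
  have hy : y ∈ Submodule.span K ({x} : Set M) := by
    rw [heq]; exact Submodule.subset_span (Set.mem_insert_of_mem _ rfl)
  obtain ⟨c, hc⟩ := Submodule.mem_span_singleton.mp hy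
  exact ⟨c, hc.symm⟩

/-- Let `𝔽` be `ℝ` or `ℂ`, `n ≥ 3`, and let `V` be a real subspace of
`𝔽^{n-2} ⊕ 𝔽^{n-2}` such that for every `(x, y) ∈ V` the `𝔽`-span of `{x, y}` has
`𝔽`-dimension at most `1`.  Then either `dim_ℝ V ≤ (dim_ℝ 𝔽)(n-2)`, or `n = 3` and
`dim_ℝ V ≤ 2 · dim_ℝ 𝔽`. -/
theorem stmt15 (𝔽 : Type*) [RCLike 𝔽] (n : ℕ) (hn : 3 ≤ n)
    (V : Submodule ℝ ((Fin (n - 2) → 𝔽) × (Fin (n - 2) → 𝔽)))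
    (hV : ∀ p ∈ V,
      Module.finrank 𝔽 (Submodule.span 𝔽 {p.1, p.2} : Submodule 𝔽 (Fin (n - 2) → 𝔽)) ≤ 1) :
    Module.finrank ℝ V ≤ Module.finrank ℝ 𝔽 * (n - 2) ∨
      (n = 3 ∧ Module.finrank ℝ V ≤ 2 * Module.finrank ℝ 𝔽) := by
  have hmm : n - 2 = n - 2 := rfl
  have hpi : finrank ℝ (Fin (n-2) → 𝔽) = finrank ℝ 𝔽 * (n-2) := by
    have := Module.finrank_mul_finrank ℝ 𝔽 (Fin (n-2) → 𝔽)
    rw [Module.finrank_fin_fun] at this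
    exact this.symm
  by_cases h3 : n = 3
  · right
    refine ⟨h3, ?_⟩
    have hm1 : n - 2 = 1 := by omega
    have h4 := V.finrank_le
    rw [Module.finrank_prod, hpi] at h4
    have h5 : finrank ℝ 𝔽 * (n - 2) = finrank ℝ 𝔽 := by rw [hm1, mul_one]
    omega
  · left
    have hm2 : 2 ≤ n - 2 := by omega
    by_cases hfst : ∀ p ∈ V, p.1 = 0 → p = 0
    · have hinj : Function.Injective ((LinearMap.fst ℝ (Fin (n-2) → 𝔽) (Fin (n-2) → 𝔽)).comp V.subtype) := by
        rw [← LinearMap.ker_eq_bot, LinearMap.ker_eq_bot']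
        rintro ⟨p, hp⟩ hp1
        exact Subtype.ext (hfst p hp hp1)
      have := LinearMap.finrank_le_finrank_of_injective hinj
      rw [hpi] at this
      exact this
    · by_cases hsnd : ∀ p ∈ V, p.2 = 0 → p = 0
      · have hinj : Function.Injective ((LinearMap.snd ℝ (Fin (n-2) → 𝔽) (Fin (n-2) → 𝔽)).comp V.subtype) := by
          rw [← LinearMap.ker_eq_bot, LinearMap.ker_eq_bot']
          rintro ⟨p, hp⟩ hp2
          exact Subtype.ext (hsnd p hp hp2)
        have := LinearMap.finrank_le_finrank_of_injective hinj
        rw [hpi] at this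
        exact this
      · push_neg at hfst hsnd
        obtain ⟨q, hqV, hq1, hq0⟩ := hfst
        obtain ⟨r, hrV, hr2, hr0⟩ := hsnd
        set y₀ := q.2 with hy₀
        set x₀ := r.1 with hx₀
        have hy₀0 : y₀ ≠ 0 := fun h => hq0 (Prod.ext hq1 h)
        have hx₀0 : x₀ ≠ 0 := fun h => hr0 (Prod.ext h hr2)
        have hA : ∀ p ∈ V, p.1 ∈ (𝔽 ∙ y₀) := by
          rintro ⟨x, y⟩ hxy
          show x ∈ (𝔽 ∙ y₀)
          by_cases hx : x = 0
          · simp [hx]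
          · obtain ⟨a, ha⟩ := aux_dep (hV _ hxy) hx
            have h2 : (x, y) + q ∈ V := V.add_mem hxy hqV
            have h2' := hV _ h2
            have hq1' : ((x, y) + q).1 = x := by simp [hq1]
            have hq2' : ((x, y) + q).2 = y + y₀ := rfl
            rw [hq1', hq2'] at h2'
            obtain ⟨b, hb⟩ := aux_dep h2' hx
            have hyy : y₀ = (b - a) • x := by
              have : y + y₀ - y = b • x - a • x := by rw [← ha, ← hb]
              simpa [sub_smul] using this
            have hba : b - a ≠ 0 := by
              intro h; rw [h, zero_smul] at hyy; exact hy₀0 hyy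
            rw [Submodule.mem_span_singleton]
            exact ⟨(b - a)⁻¹, by rw [hyy, smul_smul, inv_mul_cancel₀ hba, one_smul]⟩
        have hB : ∀ p ∈ V, p.2 ∈ (𝔽 ∙ x₀) := by
          rintro ⟨x, y⟩ hxy
          show y ∈ (𝔽 ∙ x₀)
          by_cases hy : y = 0
          · simp [hy]
          · have hsw : ∀ u v : Fin (n-2) → 𝔽, Submodule.span 𝔽 ({u, v} : Set (Fin (n-2) → 𝔽)) =
                Submodule.span 𝔽 {v, u} := by intro u v; rw [Set.pair_comm]
            have h1 := hV _ hxy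
            rw [hsw] at h1
            obtain ⟨a, ha⟩ := aux_dep h1 hy
            have h2 : (x, y) + r ∈ V := V.add_mem hxy hrV
            have h2' := hV _ h2
            have hr1' : ((x, y) + r).1 = x + x₀ := rfl
            have hr2' : ((x, y) + r).2 = y := by simp [hr2]
            rw [hr1', hr2', hsw] at h2'
            obtain ⟨b, hb⟩ := aux_dep h2' hy
            have hxx : x₀ = (b - a) • y := by
              have : x + x₀ - x = b • y - a • y := by rw [← ha, ← hb]
              simpa [sub_smul] using this
            have hba : b - a ≠ 0 := by
              intro h; rw [h, zero_smul] at hxx; exact hx₀0 hxx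
            rw [Submodule.mem_span_singleton]
            exact ⟨(b - a)⁻¹, by rw [hxx, smul_smul, inv_mul_cancel₀ hba, one_smul]⟩
        set A : Submodule ℝ (Fin (n-2) → 𝔽) := (𝔽 ∙ y₀).restrictScalars ℝ with hAdef
        set B : Submodule ℝ (Fin (n-2) → 𝔽) := (𝔽 ∙ x₀).restrictScalars ℝ with hBdef
        let f : V →ₗ[ℝ] A × B :=
          LinearMap.prod
            (((LinearMap.fst ℝ (Fin (n-2) → 𝔽) (Fin (n-2) → 𝔽)).comp V.subtype).codRestrict A
              (fun p => hA p p.2))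
            (((LinearMap.snd ℝ (Fin (n-2) → 𝔽) (Fin (n-2) → 𝔽)).comp V.subtype).codRestrict B
              (fun p => hB p p.2))
        have hinj : Function.Injective f := by
          rw [← LinearMap.ker_eq_bot, LinearMap.ker_eq_bot']
          rintro ⟨p, hp⟩ hfp
          have h1 : p.1 = 0 := congrArg (Subtype.val ∘ Prod.fst) hfp
          have h2 : p.2 = 0 := congrArg (Subtype.val ∘ Prod.snd) hfp
          exact Subtype.ext (Prod.ext h1 h2)
        have hle := LinearMap.finrank_le_finrank_of_injective hinj
        have hsing : ∀ v : Fin (n-2) → 𝔽, v ≠ 0 →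
            finrank ℝ ((𝔽 ∙ v).restrictScalars ℝ) = finrank ℝ 𝔽 := by
          intro v hv
          have h1 : finrank 𝔽 (𝔽 ∙ v) = 1 := finrank_span_singleton hv
          have := Module.finrank_mul_finrank ℝ 𝔽 (𝔽 ∙ v)
          rw [h1, mul_one] at this
          exact this.symm
        have hAB : finrank ℝ (A × B) = 2 * finrank ℝ 𝔽 := by
          rw [Module.finrank_prod, hAdef, hBdef, hsing _ hy₀0, hsing _ hx₀0]
          ring
        rw [hAB] at hle
        have hd : 1 ≤ finrank ℝ 𝔽 := Module.finrank_pos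
        calc finrank ℝ V ≤ 2 * finrank ℝ 𝔽 := hle
          _ ≤ finrank ℝ 𝔽 * (n-2) := by nlinarith
end

section
/- Let n be even, let B' ∈ SO(n-2,ℝ) have no real eigenvalue, and define the ℝ-linear map B : ℂ^{n-2} → ℂ^{n-2} by xB = (conjugate of x)·B'. Then: (1) Im((vB)(wB)†) = −Im(vw†) for all v,w ∈ ℂ^{n-2}; and (2) xB ∉ ℂx for every nonzero x ∈ ℂ^{n-2}. -/
open Complex

/-- Let `n` be even, let `B' ∈ SO(n-2, ℝ)` have no real eigenvalue, and
define the `ℝ`-linear map `B : ℂ^{n-2} → ℂ^{n-2}` by `x B = conj(x) · B'`.  Then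
(1) `Im((vB)(wB)†) = −Im(v w†)` for all `v, w ∈ ℂ^{n-2}`; and (2) `x B ∉ ℂ x` for every
nonzero `x ∈ ℂ^{n-2}`. -/
theorem stmt17 (n : ℕ) (hn : Even n)
    (B' : Matrix (Fin (n - 2)) (Fin (n - 2)) ℝ)
    (horth : B' * B'.transpose = 1) (hdet : B'.det = 1)
    (heig : ∀ (c : ℝ) (x : Fin (n - 2) → ℝ), Matrix.vecMul x B' = c • x → x = 0)
    (B : (Fin (n - 2) → ℂ) → (Fin (n - 2) → ℂ))
    (hB : ∀ (x : Fin (n - 2) → ℂ) (j : Fin (n - 2)),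
      B x j = ∑ i, (starRingEnd ℂ) (x i) * (B' i j : ℂ)) :
    (∀ v w : Fin (n - 2) → ℂ,
      (∑ j, B v j * (starRingEnd ℂ) (B w j)).im =
        -(∑ j, v j * (starRingEnd ℂ) (w j)).im) ∧
    (∀ x : Fin (n - 2) → ℂ, x ≠ 0 → ∀ lam : ℂ, B x ≠ lam • x) := by
  have horthC : ∀ i k, (∑ j, (B' i j : ℂ) * (B' k j : ℂ)) = if i = k then 1 else 0 := by
    intro i k
    have h : (∑ j, B' i j * B' k j) = if i = k then (1 : ℝ) else 0 := by
      have h := congrFun (congrFun horth i) k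
      simpa [Matrix.mul_apply, Matrix.transpose_apply, Matrix.one_apply] using h
    rw [show ((if i = k then 1 else 0 : ℂ)) = (((if i = k then (1:ℝ) else 0) : ℝ) : ℂ) by
      split <;> simp, ← h]
    push_cast
    rfl
  -- key computation
  have key : ∀ v w : Fin (n - 2) → ℂ,
      (∑ j, B v j * (starRingEnd ℂ) (B w j)) = ∑ i, (starRingEnd ℂ) (v i) * w i := by
    intro v w
    have step : ∀ j, B v j * (starRingEnd ℂ) (B w j)
        = ∑ i, ∑ k, ((starRingEnd ℂ) (v i) * w k) * ((B' i j : ℂ) * (B' k j : ℂ)) := by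
      intro j
      rw [hB, hB, map_sum, Finset.sum_mul]
      refine Finset.sum_congr rfl fun i _ => ?_
      rw [Finset.mul_sum]
      refine Finset.sum_congr rfl fun k _ => ?_
      simp only [map_mul, Complex.conj_conj, Complex.conj_ofReal]
      ring
    calc (∑ j, B v j * (starRingEnd ℂ) (B w j))
        = ∑ j, ∑ i, ∑ k, ((starRingEnd ℂ) (v i) * w k) * ((B' i j : ℂ) * (B' k j : ℂ)) :=
          Finset.sum_congr rfl fun j _ => step j
      _ = ∑ i, ∑ k, ∑ j, ((starRingEnd ℂ) (v i) * w k) * ((B' i j : ℂ) * (B' k j : ℂ)) := by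
          rw [Finset.sum_comm]
          exact Finset.sum_congr rfl fun i _ => Finset.sum_comm
      _ = ∑ i, ∑ k, ((starRingEnd ℂ) (v i) * w k) * (∑ j, (B' i j : ℂ) * (B' k j : ℂ)) := by
          refine Finset.sum_congr rfl fun i _ => Finset.sum_congr rfl fun k _ => ?_
          rw [Finset.mul_sum]
      _ = ∑ i, (starRingEnd ℂ) (v i) * w i := by
          refine Finset.sum_congr rfl fun i _ => ?_
          simp only [horthC]
          simp [Finset.sum_ite_eq]
  constructor
  · intro v w
    rw [key]
    have : (∑ i, (starRingEnd ℂ) (v i) * w i)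
        = (starRingEnd ℂ) (∑ j, v j * (starRingEnd ℂ) (w j)) := by
      rw [map_sum]
      exact Finset.sum_congr rfl fun j _ => by rw [map_mul, Complex.conj_conj, mul_comm]
    rw [this, Complex.conj_im]
  · intro x hx lam hcon
    obtain ⟨i0, hi0⟩ : ∃ i, x i ≠ 0 := Function.ne_iff.mp hx
    -- |lam| = 1
    have hkey := key x x
    rw [hcon] at hkey
    have hS : (∑ i, (starRingEnd ℂ) (x i) * x i) = ((∑ i, Complex.normSq (x i) : ℝ) : ℂ) := by
      push_cast
      exact Finset.sum_congr rfl fun i _ => by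
        rw [Complex.normSq_eq_conj_mul_self]
    have hL : (∑ j, (lam • x) j * (starRingEnd ℂ) ((lam • x) j))
        = ((Complex.normSq lam : ℝ) : ℂ) * ((∑ i, Complex.normSq (x i) : ℝ) : ℂ) := by
      push_cast
      rw [Finset.mul_sum]
      refine Finset.sum_congr rfl fun j _ => ?_
      simp only [Pi.smul_apply, smul_eq_mul, map_mul]
      rw [mul_mul_mul_comm, Complex.mul_conj, Complex.mul_conj]
    rw [hL, hS] at hkey
    have hrpos : 0 < ∑ i, Complex.normSq (x i) :=
      Finset.sum_pos' (fun i _ => Complex.normSq_nonneg _)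
        ⟨i0, Finset.mem_univ _, Complex.normSq_pos.mpr hi0⟩
    have hnorm : Complex.normSq lam = 1 := by
      have : (Complex.normSq lam) * (∑ i, Complex.normSq (x i)) = ∑ i, Complex.normSq (x i) := by
        exact_mod_cast hkey
      have := mul_right_cancel₀ (ne_of_gt hrpos) (by rw [this, one_mul] : (Complex.normSq lam) * (∑ i, Complex.normSq (x i)) = 1 * (∑ i, Complex.normSq (x i)))
      exact this
    -- B (B x) = x, computed two ways
    have hBB : ∀ j, (∑ k, x k * ((B' * B') k j : ℂ)) = x j := by
      intro j
      have h1 : B (B x) j = ∑ k, x k * ((B' * B') k j : ℂ) := by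
        rw [hB]
        calc (∑ i, (starRingEnd ℂ) (B x i) * (B' i j : ℂ))
            = ∑ i, ∑ k, x k * ((B' k i : ℂ) * (B' i j : ℂ)) := by
              refine Finset.sum_congr rfl fun i _ => ?_
              rw [hB, map_sum, Finset.sum_mul]
              refine Finset.sum_congr rfl fun k _ => ?_
              simp only [map_mul, Complex.conj_conj, Complex.conj_ofReal]
              ring
          _ = ∑ k, x k * ((B' * B') k j : ℂ) := by
              rw [Finset.sum_comm]
              refine Finset.sum_congr rfl fun k _ => ?_
              rw [Matrix.mul_apply]
              push_cast
              rw [Finset.mul_sum]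
      have h2 : B (B x) j = x j := by
        rw [hcon, hB]
        calc (∑ i, (starRingEnd ℂ) ((lam • x) i) * (B' i j : ℂ))
            = (starRingEnd ℂ) lam * ∑ i, (starRingEnd ℂ) (x i) * (B' i j : ℂ) := by
              rw [Finset.mul_sum]
              refine Finset.sum_congr rfl fun i _ => ?_
              simp only [Pi.smul_apply, smul_eq_mul, map_mul]
              ring
          _ = (starRingEnd ℂ) lam * B x j := by rw [← hB]
          _ = (starRingEnd ℂ) lam * (lam * x j) := by rw [hcon]; simp
          _ = ((Complex.normSq lam : ℝ) : ℂ) * x j := by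
              rw [← mul_assoc, ← Complex.normSq_eq_conj_mul_self]
          _ = x j := by rw [hnorm]; simp
      rw [← h1, h2]
    -- pass to real eigenvectors of B' * B'
    have main : ∀ y : Fin (n - 2) → ℝ, Matrix.vecMul y (B' * B') = y → y = 0 := by
      intro y hy
      have hz : Matrix.vecMul (Matrix.vecMul y B' + y) B'
          = (1 : ℝ) • (Matrix.vecMul y B' + y) := by
        rw [Matrix.add_vecMul, Matrix.vecMul_vecMul, hy, one_smul, add_comm]
      have hz0 := heig 1 _ hz
      have hneg : Matrix.vecMul y B' = (-1 : ℝ) • y := by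
        have : Matrix.vecMul y B' + y = 0 := hz0
        funext j
        have := congrFun this j
        simp only [Pi.add_apply, Pi.zero_apply] at this
        simp only [Pi.smul_apply, smul_eq_mul, neg_one_mul]
        linarith
      exact heig (-1) y hneg
    have hre : (fun k => (x k).re) = 0 := by
      apply main
      funext j
      have := congrArg Complex.re (hBB j)
      simp only [Complex.re_sum, Complex.mul_re, Complex.ofReal_re, Complex.ofReal_im,
        mul_zero, sub_zero] at this
      simpa [Matrix.vecMul, dotProduct] using this
    have him : (fun k => (x k).im) = 0 := by
      apply main
      funext j
      have := congrArg Complex.im (hBB j)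
      simp only [Complex.im_sum, Complex.mul_im, Complex.ofReal_re, Complex.ofReal_im,
        mul_zero, zero_add] at this
      simpa [Matrix.vecMul, dotProduct] using this
    apply hi0
    have h1 := congrFun hre i0
    have h2 := congrFun him i0
    simp only [Pi.zero_apply] at h1 h2
    exact Complex.ext h1 h2
end
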